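/- arXiv:2006.15187 — 3 statements merged into one kernel-verified Lean document; each statement's English description precedes it below -/
import Mathlib

section
/- If two interface states satisfy the lake-at-rest condition, i.e., u^int = u^ext = 0, v^int = v^ext = 0 and h^int + B^int = h^ext + B^ext = C with C ≥ max(B^int, B^ext), then the hydrostatic reconstructions coincide: h^{*,int} = h^{*,ext} = C - max(B^int, B^ext), and hence the reconstructed states U^{*,int} and U^{*,ext} are equal. -/
/-- Hydrostatic reconstruction of an interface state `(h, h·u, h·v)`:
`U* = (h*, (h*/h)·(h u), (h*/h)·(h v))` (with the convention `x/0 = 0`). -/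
noncomputable def hydroReconstruct (hdep hstar m w : ℝ) : Fin 3 → ℝ :=
  ![hstar, (hstar / hdep) * m, (hstar / hdep) * w]

/-- Under the lake-at-rest condition (`u = v = 0` on both sides and
`h^int + B^int = h^ext + B^ext = C ≥ max(B^int, B^ext)`), the hydrostatic
reconstructions coincide: `h^{*,int} = h^{*,ext} = C - max(B^int,B^ext)` and
the reconstructed states are equal. -/
theorem lake_at_rest_reconstructions_coincide
    (hint hext Bint Bext C uint vint uext vext : ℝ)
    (hhint : 0 ≤ hint) (hhext : 0 ≤ hext)
    (huint : uint = 0) (hvint : vint = 0) (huext : uext = 0) (hvext : vext = 0)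
    (hCint : hint + Bint = C) (hCext : hext + Bext = C)
    (hC : max Bint Bext ≤ C)
    (hstarInt hstarExt : ℝ)
    (hdefInt : hstarInt = max 0 (hint + Bint - max Bint Bext))
    (hdefExt : hstarExt = max 0 (hext + Bext - max Bint Bext)) :
    hstarInt = C - max Bint Bext ∧
    hstarExt = C - max Bint Bext ∧
    hydroReconstruct hint hstarInt (hint * uint) (hint * vint) =
      hydroReconstruct hext hstarExt (hext * uext) (hext * vext) := by
  have h1 : hstarInt = C - max Bint Bext := by
    rw [hdefInt, hCint, max_eq_right (by linarith)]
  have h2 : hstarExt = C - max Bint Bext := by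
    rw [hdefExt, hCext, max_eq_right (by linarith)]
  refine ⟨h1, h2, ?_⟩
  subst huint hvint huext hvext
  simp [hydroReconstruct, h1, h2]
end

section
/- Under the lake-at-rest condition at an interface (u=v=0 on both sides, h^int + B^int = h^ext + B^ext = C ≥ max(B^int,B^ext)), the modified numerical flux F̂* := F̂(U^{*,int}, U^{*,ext}, n) + Δ*·n, where F̂ is the Lax–Friedrichs flux and Δ* is the hydrostatic correction matrix, equals the exact interior flux F(U^int)·n = (0, ½g(h^int)² n_x, ½g(h^int)² n_y). -/
/-- 2D shallow-water flux in direction `n = (nx, ny)`, in conserved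
variables `U = (h, m, w) = (h, hu, hv)` (convention `x/0 = 0`). -/
noncomputable def swFluxN (g : ℝ) (U : Fin 3 → ℝ) (nx ny : ℝ) : Fin 3 → ℝ :=
  ![U 1 * nx + U 2 * ny,
    ((U 1) ^ 2 / U 0 + g / 2 * (U 0) ^ 2) * nx + (U 1 * U 2 / U 0) * ny,
    (U 1 * U 2 / U 0) * nx + ((U 2) ^ 2 / U 0 + g / 2 * (U 0) ^ 2) * ny]

/-- Lax–Friedrichs numerical flux in direction `n`. -/
noncomputable def lfFlux (g α : ℝ) (UL UR : Fin 3 → ℝ) (nx ny : ℝ) : Fin 3 → ℝ :=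
  fun i => (swFluxN g UL nx ny i + swFluxN g UR nx ny i) / 2 - α / 2 * (UR i - UL i)

/-- Under the lake-at-rest condition at an interface, the corrected flux
`F̂* = F̂(U^{*,int}, U^{*,ext}, n) + Δ*·n` equals the exact interior flux
`F(U^int)·n = (0, ½g(h^int)² nx, ½g(h^int)² ny)`. -/
theorem lake_at_rest_corrected_flux
    (g α hint hext Bint Bext C nx ny : ℝ)
    (hα : 0 ≤ α) (hhint : 0 ≤ hint) (hhext : 0 ≤ hext)
    (hCint : hint + Bint = C) (hCext : hext + Bext = C)
    (hC : max Bint Bext ≤ C)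
    (hstarInt hstarExt : ℝ)
    (hdefInt : hstarInt = max 0 (hint + Bint - max Bint Bext))
    (hdefExt : hstarExt = max 0 (hext + Bext - max Bint Bext))
    (UstarInt UstarExt Δn : Fin 3 → ℝ)
    (hUint : UstarInt = hydroReconstruct hint hstarInt (hint * 0) (hint * 0))
    (hUext : UstarExt = hydroReconstruct hext hstarExt (hext * 0) (hext * 0))
    (hΔ : Δn = ![0, (g / 2 * hint ^ 2 - g / 2 * hstarInt ^ 2) * nx,
                    (g / 2 * hint ^ 2 - g / 2 * hstarInt ^ 2) * ny]) :
    (fun i => lfFlux g α UstarInt UstarExt nx ny i + Δn i) =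
      ![0, g / 2 * hint ^ 2 * nx, g / 2 * hint ^ 2 * ny] := by
  have hstar_eq : hstarExt = hstarInt := by rw [hdefInt, hdefExt, hCint, hCext]
  subst hstar_eq hUint hUext hΔ
  funext i
  fin_cases i <;>
    simp [lfFlux, swFluxN, hydroReconstruct, mul_zero, zero_div] <;> ring
end

section
/- The linear scaling positivity-preserving limiter preserves cell averages and nonnegativity: given a function p on a cell K with average p̄ ≥ 0 and minimum m = min over a finite set of points, the limited function p̃(x) = θ(p(x) - p̄) + p̄ with θ = min(1, p̄/(p̄ - m)) (θ=1 if m ≥ 0) satisfies (i) p̃ has the same average p̄, (ii) p̃ ≥ 0 at all the specified points, and (iii) |p̃(x) - p(x)| = (1-θ)|p(x) - p̄| ≤ |p(x) - p̄| at every point. -/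
open MeasureTheory

/-! The limited function is the convex combination `θ p + (1 - θ) p̄` of `p` and its average,
so it has the same average, and it moves each value towards `p̄` by the factor `1 - θ`.
The choice of `θ` is exactly what makes `θ (p̄ - m) ≤ p̄`, hence the smallest value `m` of `p`
on the points is mapped to `p̄ - θ (p̄ - m) ≥ 0`. -/

theorem integral_smul_sub_average_add_average {α E : Type*} [MeasurableSpace α]
    [NormedAddCommGroup E] [NormedSpace ℝ E] [CompleteSpace E]
    {μ : Measure α} [IsFiniteMeasure μ] {f : α → E} (hf : Integrable f μ) (θ : ℝ) :
    ∫ x, θ • (f x - ⨍ y, f y ∂μ) + ⨍ y, f y ∂μ ∂μ = ∫ x, f x ∂μ := by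
  have hdev : Integrable (fun x => θ • (f x - ⨍ y, f y ∂μ)) μ :=
    (hf.sub (integrable_const _)).smul θ
  rw [integral_add hdev (integrable_const _), integral_smul,
    integral_sub hf (integrable_const _), integral_const, measure_smul_average, sub_self,
    smul_zero, zero_add]

section Scaling

variable {θ c y : ℝ}

theorem abs_scale_add_sub_self (hθ : θ ≤ 1) :
    |θ * (y - c) + c - y| = (1 - θ) * |y - c| := by
  rw [show θ * (y - c) + c - y = (1 - θ) * -(y - c) by ring, abs_mul, abs_neg,
    abs_of_nonneg (sub_nonneg.mpr hθ)]

theorem abs_scale_add_sub_self_le (hθ₀ : 0 ≤ θ) (hθ₁ : θ ≤ 1) :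
    |θ * (y - c) + c - y| ≤ |y - c| := by
  rw [abs_scale_add_sub_self hθ₁]
  exact mul_le_of_le_one_left (abs_nonneg _) (by linarith)

theorem scale_add_nonneg {m : ℝ} (hθ : 0 ≤ θ) (hθm : θ * (c - m) ≤ c) (hy : m ≤ y) :
    0 ≤ θ * (y - c) + c := by
  nlinarith

end Scaling

/-- The Zhang–Shu scaling factor for a cell average `c` and a minimum `m`. -/
noncomputable def zhangShuTheta (c m : ℝ) : ℝ :=
  if 0 ≤ m then 1 else min 1 (c / (c - m))

section ZhangShuTheta

variable {c m : ℝ}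

theorem zhangShuTheta_nonneg (hc : 0 ≤ c) : 0 ≤ zhangShuTheta c m := by
  unfold zhangShuTheta
  split_ifs with hm
  · exact zero_le_one
  · exact le_min zero_le_one (div_nonneg hc (by linarith))

theorem zhangShuTheta_le_one : zhangShuTheta c m ≤ 1 := by
  unfold zhangShuTheta
  split_ifs
  exacts [le_rfl, min_le_left _ _]

theorem zhangShuTheta_mul_sub_le (hc : 0 ≤ c) : zhangShuTheta c m * (c - m) ≤ c := by
  unfold zhangShuTheta
  split_ifs with hm
  · linarith
  · have hcm : 0 < c - m := by linarith
    exact (le_div_iff₀ hcm).mp (min_le_right _ _)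

end ZhangShuTheta

theorem linear_scaling_pp_limiter_general
    {α : Type*} [MeasurableSpace α] (μ : Measure α) [IsFiniteMeasure μ]
    (p : α → ℝ) (hp : Integrable p μ)
    (pts : Finset α) (hpts : pts.Nonempty)
    (pbar : ℝ) (hpbar : pbar = (∫ x, p x ∂μ) / (μ Set.univ).toReal)
    (hpbar0 : 0 ≤ pbar)
    (m : ℝ) (hm : m = (pts.image p).min' (hpts.image p))
    (θ : ℝ) (hθ : θ = if 0 ≤ m then 1 else min 1 (pbar / (pbar - m)))
    (pt : α → ℝ) (hpt : pt = fun x => θ * (p x - pbar) + pbar) :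
    (∫ x, pt x ∂μ) = ∫ x, p x ∂μ ∧
    (∀ x ∈ pts, 0 ≤ pt x) ∧
    (∀ x, |pt x - p x| = (1 - θ) * |p x - pbar| ∧ |pt x - p x| ≤ |p x - pbar|) := by
  replace hθ : θ = zhangShuTheta pbar m := hθ
  have hθ₀ : 0 ≤ θ := hθ ▸ zhangShuTheta_nonneg hpbar0
  have hθ₁ : θ ≤ 1 := hθ ▸ zhangShuTheta_le_one
  have hpbar_avg : pbar = ⨍ x, p x ∂μ := by
    rw [hpbar, average_eq, smul_eq_mul, measureReal_def, div_eq_inv_mul]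
  subst hpt
  refine ⟨?_, fun x hx => ?_,
    fun x => ⟨abs_scale_add_sub_self hθ₁, abs_scale_add_sub_self_le hθ₀ hθ₁⟩⟩
  · rw [hpbar_avg]
    exact integral_smul_sub_average_add_average hp θ
  · have hmx : m ≤ p x := hm ▸ Finset.min'_le _ _ (Finset.mem_image_of_mem p hx)
    exact scale_add_nonneg hθ₀ (hθ ▸ zhangShuTheta_mul_sub_le hpbar0) hmx

/-- The linear scaling positivity-preserving limiter
`p̃ = θ (p - p̄) + p̄`, with `θ = min 1 (p̄/(p̄ - m))` (and `θ = 1` if `m ≥ 0`),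
preserves the cell average, is nonnegative at the specified points, and
changes `p` by at most `|p - p̄|` at every point. -/
theorem linear_scaling_pp_limiter
    {α : Type*} [MeasurableSpace α] (μ : Measure α) [IsFiniteMeasure μ]
    (hμ : μ Set.univ ≠ 0)
    (p : α → ℝ) (hp : Integrable p μ)
    (pts : Finset α) (hpts : pts.Nonempty)
    (pbar : ℝ) (hpbar : pbar = (∫ x, p x ∂μ) / (μ Set.univ).toReal)
    (hpbar0 : 0 ≤ pbar)
    (m : ℝ) (hm : m = (pts.image p).min' (hpts.image p))
    (hwd : m < 0 → m < pbar)
    (θ : ℝ) (hθ : θ = if 0 ≤ m then 1 else min 1 (pbar / (pbar - m)))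
    (pt : α → ℝ) (hpt : pt = fun x => θ * (p x - pbar) + pbar) :
    (∫ x, pt x ∂μ) = ∫ x, p x ∂μ ∧
    (∀ x ∈ pts, 0 ≤ pt x) ∧
    (∀ x, |pt x - p x| = (1 - θ) * |p x - pbar| ∧ |pt x - p x| ≤ |p x - pbar|) :=
  linear_scaling_pp_limiter_general μ p hp pts hpts pbar hpbar hpbar0 m hm θ hθ pt hpt
end
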